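/- arXiv:1909.00386 — 2 statements merged into one kernel-verified Lean document; each statement's English description precedes it below -/
import Mathlib

section
/- Non-convexity of the degree-3 stability domain: the set S = {(θ₁,θ₂,θ₃) ∈ R³ : 1+θ₁+θ₂+θ₃ > 0, 3+θ₁−θ₂−3θ₃ > 0, 1−θ₁+θ₂−θ₃ > 0, 1−θ₂−θ₃²+θ₁θ₃ > 0} is not convex. -/
/-! The points `(3r, 3r², r³)` and `(-3r, 3r², -r³)`, the coefficients of `(1 + r z)³` and
`(1 - r z)³`, lie in the domain whenever `|r| < 1`, since the four defining quantities factor as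
`(1 + r)³`, `3 (1 + r)² (1 - r)`, `(1 - r)³` and `(1 - r²)³`. Their midpoint `(0, 3r², 0)` violates
the last inequality as soon as `3r² ≥ 1`. -/

def stabilityDomain3 : Set (ℝ × ℝ × ℝ) :=
  {p | 0 < 1 + p.1 + p.2.1 + p.2.2 ∧
    0 < 3 + p.1 - p.2.1 - 3 * p.2.2 ∧
    0 < 1 - p.1 + p.2.1 - p.2.2 ∧
    0 < 1 - p.2.1 - p.2.2 ^ 2 + p.1 * p.2.2}

def tripleRootCoeffs (r : ℝ) : ℝ × ℝ × ℝ := (3 * r, 3 * r ^ 2, r ^ 3)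

theorem tripleRootCoeffs_mem_stabilityDomain3 {r : ℝ} (hr : |r| < 1) :
    tripleRootCoeffs r ∈ stabilityDomain3 := by
  obtain ⟨hr₁, hr₂⟩ := abs_lt.mp hr
  have hp : 0 < 1 + r := by linarith
  have hm : 0 < 1 - r := by linarith
  refine ⟨?_, ?_, ?_, ?_⟩ <;> simp only [tripleRootCoeffs]
  · calc (0 : ℝ) < (1 + r) ^ 3 := by positivity
      _ = _ := by ring
  · calc (0 : ℝ) < 3 * (1 + r) ^ 2 * (1 - r) := by positivity
      _ = _ := by ring
  · calc (0 : ℝ) < (1 - r) ^ 3 := by positivity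
      _ = _ := by ring
  · calc (0 : ℝ) < ((1 + r) * (1 - r)) ^ 3 := by positivity
      _ = _ := by ring

theorem midpoint_tripleRootCoeffs_neg (r : ℝ) :
    midpoint ℝ (tripleRootCoeffs r) (tripleRootCoeffs (-r)) = (0, 3 * r ^ 2, 0) := by
  simp only [midpoint_eq_smul_add, invOf_eq_inv, tripleRootCoeffs, Prod.mk_add_mk, Prod.smul_mk, smul_eq_mul,
    Prod.mk.injEq]
  refine ⟨?_, ?_, ?_⟩ <;> ring

theorem notMem_stabilityDomain3_of_one_le {t : ℝ} (ht : 1 ≤ t) :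
    ((0 : ℝ), t, (0 : ℝ)) ∉ stabilityDomain3 := by
  rintro ⟨-, -, -, h⟩
  norm_num at h
  linarith

/-- The degree-3 stability domain is not convex. -/
theorem stmt13 :
    ¬ Convex ℝ {p : ℝ × ℝ × ℝ |
      0 < 1 + p.1 + p.2.1 + p.2.2 ∧
      0 < 3 + p.1 - p.2.1 - 3 * p.2.2 ∧
      0 < 1 - p.1 + p.2.1 - p.2.2 ∧
      0 < 1 - p.2.1 - p.2.2 ^ 2 + p.1 * p.2.2} := by
  intro hconv
  have hr : |(9 / 10 : ℝ)| < 1 := by norm_num [abs_of_pos]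
  have hmid := hconv.midpoint_mem (tripleRootCoeffs_mem_stabilityDomain3 hr)
    (tripleRootCoeffs_mem_stabilityDomain3 (abs_neg (9 / 10 : ℝ) ▸ hr))
  rw [midpoint_tripleRootCoeffs_neg] at hmid
  exact notMem_stabilityDomain3_of_one_le (by norm_num) hmid
end

section
/- Block decomposition: with θ̄_j, Ξ, Θ̄_T as above and Θ̄_{*;T−q} the Ts×qs matrix whose top q×q block part has (i,j) block θ̄_{q+j−i} for 1 ≤ i ≤ q (zero rows below), the full block Toeplitz autocovariance matrix Σ̄_T (with (i,j) block γ̄_{|j−i|} appropriately transposed) satisfies Σ̄_T = Θ̄_T(I_T ⊗ Ξ)Θ̄_T' + Θ̄_{*;T−q}(I_q ⊗ Ξ)Θ̄_{*;T−q}'. -/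
open Matrix Kronecker
open Finset

lemma prod_entry {n s : ℕ} {ι : Type*} [Fintype ι]
    (P : Matrix (ι × Fin s) (Fin n × Fin s) ℝ) (Xi : Matrix (Fin s) (Fin s) ℝ)
    (p r : ι × Fin s) :
    (P * ((1 : Matrix (Fin n) (Fin n) ℝ) ⊗ₖ Xi) * Pᵀ) p r
      = ∑ k : Fin n, ∑ c : Fin s, ∑ d : Fin s, P p (k,c) * Xi c d * P r (k,d) := by
  simp [Matrix.mul_apply, Fintype.sum_prod_type, Matrix.one_apply, Finset.sum_mul,
    Finset.mul_sum, ite_mul, mul_ite, mul_zero, zero_mul, Finset.sum_ite_eq, Finset.sum_ite_eq']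
  exact Finset.sum_congr rfl fun k _ => Finset.sum_comm

lemma ite_collapse {s : ℕ} (C1 C2 : Prop) [Decidable C1] [Decidable C2]
    (x y : Fin s → ℝ) (Xi : Matrix (Fin s) (Fin s) ℝ) :
    (∑ c : Fin s, ∑ d : Fin s, (if C1 then x c else 0) * Xi c d * (if C2 then y d else 0))
      = if C1 ∧ C2 then ∑ c : Fin s, ∑ d : Fin s, x c * Xi c d * y d else 0 := by
  by_cases h1 : C1 <;> by_cases h2 : C2 <;> simp [h1, h2]

lemma mmt {s : ℕ} (A B Xi : Matrix (Fin s) (Fin s) ℝ) (a b : Fin s) :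
    (A * Xi * Bᵀ) a b = ∑ c : Fin s, ∑ d : Fin s, A a c * Xi c d * B b d := by
  simp [Matrix.mul_apply, Finset.sum_mul]
  exact Finset.sum_comm

lemma swap_sum {s : ℕ} (A B Xi : Matrix (Fin s) (Fin s) ℝ)
    (hs : ∀ c d, Xi c d = Xi d c) (a b : Fin s) :
    (∑ c : Fin s, ∑ d : Fin s, A a c * Xi c d * B b d)
      = ∑ c : Fin s, ∑ d : Fin s, B b c * Xi c d * A a d := by
  rw [Finset.sum_comm]
  refine Finset.sum_congr rfl fun c _ => Finset.sum_congr rfl fun d _ => ?_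
  rw [hs]; ring

lemma sum_ite_le (f : ℕ → ℝ) (i N : ℕ) (hiN : i < N) :
    ∑ k ∈ Finset.range N, (if k ≤ i then f k else 0)
      = ∑ k ∈ Finset.range (i+1), f k := by
  rw [← Finset.sum_subset (Finset.range_subset_range.mpr hiN)
      (fun x _ hx => if_neg (by simp at hx; omega))]
  exact Finset.sum_congr rfl fun k hk => if_pos (by simp at hk; omega)

lemma key (q : ℕ) (h : ℕ → ℕ → ℝ)
    (h0 : ∀ u v, q < u ∨ q < v → h u v = 0)
    (T i j : ℕ) (hij : i ≤ j) (hjT : j < T) :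
    ((∑ k ∈ Finset.range T, if k ≤ i then h (i-k) (j-k) else 0)
      + ∑ k ∈ Finset.range q, if j ≤ k then h (q+i-k) (q+j-k) else 0)
      = ∑ m ∈ Finset.range (q+1), h m (m + (j - i)) := by
  have hiT : i < T := lt_of_le_of_lt hij hjT
  rw [sum_ite_le _ i T hiT]
  have S1 : ∑ k ∈ Finset.range (i+1), h (i-k) (j-k)
      = ∑ m ∈ Finset.range (i+1), h m (m + (j-i)) := by
    rw [← Finset.sum_range_reflect]
    refine Finset.sum_congr rfl fun k hk => ?_
    simp only [Finset.mem_range] at hk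
    congr 1 <;> omega
  have S2 : (∑ k ∈ Finset.range q, if j ≤ k then h (q+i-k) (q+j-k) else 0)
      = ∑ m ∈ Finset.Ico (i+1) (i+1+(q-j)), h m (m + (j-i)) := by
    have e1 : (∑ k ∈ Finset.range q, if j ≤ k then h (q+i-k) (q+j-k) else 0)
        = ∑ k ∈ Finset.Ico j q, h (q+i-k) (q+j-k) := by
      rw [← Finset.sum_filter]
      refine Finset.sum_congr ?_ (fun _ _ => rfl)
      ext k; simp [Finset.mem_filter, Finset.mem_range, Finset.mem_Ico, and_comm]
    rw [e1, Finset.sum_Ico_eq_sum_range, Finset.sum_Ico_eq_sum_range,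
      Nat.add_sub_cancel_left]
    conv_rhs => rw [← Finset.sum_range_reflect]
    refine Finset.sum_congr rfl fun t ht => ?_
    simp only [Finset.mem_range] at ht
    congr 1 <;> omega
  rw [S1, S2]
  have comb : (∑ m ∈ Finset.range (i+1), h m (m+(j-i)))
      + ∑ m ∈ Finset.Ico (i+1) (i+1+(q-j)), h m (m+(j-i))
      = ∑ m ∈ Finset.range (i+1+(q-j)), h m (m+(j-i)) := by
    simp only [Finset.range_eq_Ico]
    exact Finset.sum_Ico_consecutive (fun m => h m (m+(j-i))) (Nat.zero_le _) (Nat.le_add_right _ _)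
  rw [comb]
  have z1 : ∀ m, i+1+(q-j) ≤ m → h m (m+(j-i)) = 0 :=
    fun m hm => h0 _ _ (Or.inr (by omega))
  have z2 : ∀ m, q+1 ≤ m → h m (m+(j-i)) = 0 :=
    fun m hm => h0 _ _ (Or.inl (by omega))
  trans ∑ m ∈ Finset.range (max (i+1+(q-j)) (q+1)), h m (m+(j-i))
  · exact Finset.sum_subset (Finset.range_subset_range.mpr (le_max_left _ _))
      (fun m _ hm => z1 m (by simp at hm; omega))
  · exact (Finset.sum_subset (Finset.range_subset_range.mpr (le_max_right _ _))
      (fun m _ hm => z2 m (by simp at hm; omega))).symm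

/-- Block decomposition of the block Toeplitz autocovariance matrix:
`Σ̄_T = Θ̄_T (I_T ⊗ Ξ) Θ̄_Tᵀ + Θ̄_{*;T−q} (I_q ⊗ Ξ) Θ̄_{*;T−q}ᵀ`. -/
theorem stmt17 (T q s : ℕ) (hq : q ≤ T) (θ : ℕ → Matrix (Fin s) (Fin s) ℝ)
    (hθz : ∀ m, q < m → θ m = 0)
    (Xi : Matrix (Fin s) (Fin s) ℝ) (hXi : Xi.PosDef)
    (γ : ℕ → Matrix (Fin s) (Fin s) ℝ)
    (hγ : ∀ l, γ l = ∑ m ∈ Finset.range (q + 1), θ m * Xi * (θ (m + l))ᵀ)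
    (SigB ThB : Matrix (Fin T × Fin s) (Fin T × Fin s) ℝ)
    (ThS : Matrix (Fin T × Fin s) (Fin q × Fin s) ℝ)
    (hSigB : ∀ (i j : Fin T) (a b : Fin s),
      SigB (i, a) (j, b) = if (i : ℕ) ≤ (j : ℕ) then γ ((j : ℕ) - (i : ℕ)) a b
        else γ ((i : ℕ) - (j : ℕ)) b a)
    (hThB : ∀ (i j : Fin T) (a b : Fin s),
      ThB (i, a) (j, b) = if (j : ℕ) ≤ (i : ℕ) then θ ((i : ℕ) - (j : ℕ)) a b else 0)
    (hThS : ∀ (i : Fin T) (j : Fin q) (a b : Fin s),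
      ThS (i, a) (j, b) =
        if (i : ℕ) ≤ (j : ℕ) then θ (q + (i : ℕ) - (j : ℕ)) a b else 0) :
    SigB = ThB * ((1 : Matrix (Fin T) (Fin T) ℝ) ⊗ₖ Xi) * ThBᵀ
        + ThS * ((1 : Matrix (Fin q) (Fin q) ℝ) ⊗ₖ Xi) * ThSᵀ := by
  have hsym : ∀ c d, Xi c d = Xi d c := by
    intro c d
    conv_lhs => rw [← hXi.isHermitian]
    simp [Matrix.conjTranspose_apply]
  ext ⟨i, a⟩ ⟨j, b⟩
  rw [Matrix.add_apply, prod_entry, prod_entry, hSigB]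
  set g : ℕ → ℕ → ℝ :=
    fun u v => ∑ c : Fin s, ∑ d : Fin s, θ u a c * Xi c d * θ v b d with hg
  have hA : (∑ k : Fin T, ∑ c : Fin s, ∑ d : Fin s,
        ThB (i,a) (k,c) * Xi c d * ThB (j,b) (k,d))
      = ∑ k ∈ Finset.range T,
          if k ≤ (i:ℕ) ∧ k ≤ (j:ℕ) then g ((i:ℕ)-k) ((j:ℕ)-k) else 0 := by
    rw [← Fin.sum_univ_eq_sum_range]
    refine Finset.sum_congr rfl fun k _ => ?_
    simp only [hThB]
    exact ite_collapse _ _ _ _ _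
  have hB : (∑ k : Fin q, ∑ c : Fin s, ∑ d : Fin s,
        ThS (i,a) (k,c) * Xi c d * ThS (j,b) (k,d))
      = ∑ k ∈ Finset.range q,
          if (i:ℕ) ≤ k ∧ (j:ℕ) ≤ k then g (q+(i:ℕ)-k) (q+(j:ℕ)-k) else 0 := by
    rw [← Fin.sum_univ_eq_sum_range]
    refine Finset.sum_congr rfl fun k _ => ?_
    simp only [hThS]
    exact ite_collapse _ _ _ _ _
  rw [hA, hB]
  have hg0 : ∀ u v, q < u ∨ q < v → g u v = 0 := by
    intro u v huv
    rcases huv with h | h <;> simp [hg, hθz _ h]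
  rcases le_or_gt (i:ℕ) (j:ℕ) with hij | hji
  · rw [if_pos hij, hγ, Matrix.sum_apply]
    have eL : (∑ m ∈ Finset.range (q+1), (θ m * Xi * (θ (m + ((j:ℕ) - (i:ℕ))))ᵀ) a b)
        = ∑ m ∈ Finset.range (q+1), g m (m + ((j:ℕ)-(i:ℕ))) :=
      Finset.sum_congr rfl fun m _ => mmt _ _ _ _ _
    rw [eL, ← key q g hg0 T (i:ℕ) (j:ℕ) hij j.isLt]
    congr 1
    · exact Finset.sum_congr rfl fun k _ => if_congr (by omega) rfl rfl
    · exact Finset.sum_congr rfl fun k _ => if_congr (by omega) rfl rfl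
  · rw [if_neg (by omega)]
    set h' : ℕ → ℕ → ℝ :=
      fun u v => ∑ c : Fin s, ∑ d : Fin s, θ u b c * Xi c d * θ v a d with hh
    have hg' : ∀ u v, g u v = h' v u := fun u v => swap_sum _ _ _ hsym _ _
    have hh0 : ∀ u v, q < u ∨ q < v → h' u v = 0 := by
      intro u v huv
      rcases huv with h | h <;> simp [hh, hθz _ h]
    rw [hγ, Matrix.sum_apply]
    have eL : (∑ m ∈ Finset.range (q+1), (θ m * Xi * (θ (m + ((i:ℕ) - (j:ℕ))))ᵀ) b a)
        = ∑ m ∈ Finset.range (q+1), h' m (m + ((i:ℕ)-(j:ℕ))) :=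
      Finset.sum_congr rfl fun m _ => mmt _ _ _ _ _
    rw [eL, ← key q h' hh0 T (j:ℕ) (i:ℕ) (le_of_lt hji) i.isLt]
    congr 1
    · refine Finset.sum_congr rfl fun k _ => ?_
      by_cases hk : k ≤ (j:ℕ)
      · rw [if_pos (⟨by omega, hk⟩ : k ≤ (i:ℕ) ∧ k ≤ (j:ℕ)), if_pos hk, hg']
      · rw [if_neg (by omega), if_neg (by omega)]
    · refine Finset.sum_congr rfl fun k _ => ?_
      by_cases hk : (i:ℕ) ≤ k
      · rw [if_pos (⟨hk, by omega⟩ : (i:ℕ) ≤ k ∧ (j:ℕ) ≤ k), if_pos hk, hg']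
      · rw [if_neg (by omega), if_neg (by omega)]
end
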